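/- The generating function identity Σ_{π : shape(π) ⊆ ρ} t^{cor(π)} = (1−t)^{−|ρ|} holds for a fixed finite shape ρ, where the sum is over d-dimensional partitions with shape contained in ρ. -/

import Mathlib

open scoped BigOperators

noncomputable section

namespace HDP

variable {d : ℕ}

/-- The step `i → i + e_ℓ` in `ℤ₊^d` (coordinates are 0-based). -/
def step (i : Fin d → ℕ) (ℓ : Fin d) : Fin d → ℕ := Function.update i ℓ (i ℓ + 1)

/-- `p` is a directed lattice path of length `n` starting at `i`:
each step goes from a point to the point plus a standard basis vector. -/
def IsPathFrom (i : Fin d → ℕ) (n : ℕ) (p : ℕ → Fin d → ℕ) : Prop :=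
  p 0 = i ∧ ∀ t < n, ∃ ℓ, p (t + 1) = step (p t) ℓ

/-- The last passage time `G(i)`: the maximum, over directed lattice paths starting
at `i`, of the sum of the entries of `A` along the path. -/
def lpt (A : (Fin d → ℕ) → ℕ) (i : Fin d → ℕ) : ℕ :=
  sSup {s | ∃ n p, IsPathFrom i n p ∧ s = ∑ t ∈ Finset.range (n + 1), A (p t)}

/-- A `d`-dimensional partition: a finitely supported function `ℤ₊^d → ℕ`
which is weakly decreasing in each coordinate. -/
def IsPartition (π : (Fin d → ℕ) → ℕ) : Prop :=
  (Function.support π).Finite ∧ ∀ i j : Fin d → ℕ, (∀ k, i k ≤ j k) → π j ≤ π i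

/-- The set of corners of a `d`-dimensional partition `π` : points `(i, k)` of the
diagram of `π` (i.e. `1 ≤ k ≤ π i`) such that `(i + e ℓ, k)` is not in the diagram
for every `ℓ ∈ [d]`. -/
def Cor (π : (Fin d → ℕ) → ℕ) : Set ((Fin d → ℕ) × ℕ) :=
  {p | 1 ≤ p.2 ∧ p.2 ≤ π p.1 ∧ ∀ ℓ, π (step p.1 ℓ) < p.2}

/-- The number of corners of `π`. -/
def cor (π : (Fin d → ℕ) → ℕ) : ℕ := Nat.card (Cor π)

/-- The corner-hook volume of `π`: the sum over corners `(i, k)` of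
`i₁ + ⋯ + i_d - d + 1` (in 1-based coordinates; with our 0-based
coordinates this cohook length is `(∑ j, i j) + 1`). -/
def chvol (π : (Fin d → ℕ) → ℕ) : ℕ := ∑ᶠ p ∈ Cor π, ((∑ j, p.1 j) + 1)

/-- A set is down-closed for the componentwise order. -/
def DownClosed (ρ : Set (Fin d → ℕ)) : Prop :=
  ∀ i j : Fin d → ℕ, (∀ k, i k ≤ j k) → j ∈ ρ → i ∈ ρ

/-- The set of top corners of a shape `ρ`. -/
def Cr (ρ : Set (Fin d → ℕ)) : Set (Fin d → ℕ) := {i ∈ ρ | ∀ ℓ, step i ℓ ∉ ρ}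

end HDP

open HDP

/-- The product topology on formal power series (coefficientwise convergence). -/
instance powerSeriesTopology : TopologicalSpace (PowerSeries ℚ) :=
  inferInstanceAs (TopologicalSpace ((Unit →₀ ℕ) → ℚ))


/-!
For a partition `π`, the number `A i = π i - max_ℓ π (i + e_ℓ)` counts the corners above `i`:
they are the `(i, k)` with `max_ℓ π (i + e_ℓ) < k ≤ π i`, so `cor π = ∑ i, A i`.
For a finite down-closed `ρ` the map `π ↦ A` is a bijection from partitions with shape in `ρ`
onto `ρ → ℕ`, the inverse stacking from the top: `π i = A i + max_ℓ π (i + e_ℓ)`.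
Hence the sum is `∑_{A : ρ → ℕ} t ^ (∑ i, A i) = ((1 - t)⁻¹) ^ |ρ|`.
-/

namespace PowerSeries

theorem inv_one_sub_X_eq_mk_one {k : Type*} [Field k] : (1 - X : k⟦X⟧)⁻¹ = mk 1 :=
  (inv_eq_iff_mul_eq_one (by simp)).2 (mk_one_mul_one_sub_eq_one k)

namespace WithPiTopology

variable {R : Type*} [CommSemiring R] [TopologicalSpace R]

theorem hasSum_X_pow_sum (ι : Type*) [Fintype ι] :
    HasSum (fun A : ι → ℕ => (X : R⟦X⟧) ^ ∑ i, A i) (mk 1 ^ Fintype.card ι) := by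
  classical
  rw [hasSum_iff_hasSum_coeff]
  -- both sides have `n`-th coefficient `#{A | ∑ i, A i = n}`, counted via `finsuppAntidiag`
  intro n
  rw [← Finset.card_univ, ← Finset.prod_const, coeff_prod]
  simp only [coeff_mk, Pi.one_apply, Finset.prod_const_one, coeff_X_pow]
  rw [← Finsupp.equivFunOnFinite.hasSum_iff]
  have hmem (l : ι →₀ ℕ) : l ∈ Finset.univ.finsuppAntidiag n ↔ n = ∑ i, l i := by
    simp [Finset.mem_finsuppAntidiag, eq_comm]
  have hsum := hasSum_sum_of_ne_finset_zero (L := SummationFilter.unconditional _)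
    (f := fun l : ι →₀ ℕ => if n = ∑ i, l i then (1 : R) else 0)
    fun l hl => if_neg ((hmem l).not.mp hl)
  rwa [Finset.sum_congr rfl fun l hl => if_pos ((hmem l).mp hl)] at hsum

end WithPiTopology

end PowerSeries

namespace HDP

variable {d : ℕ}

theorem covBy_iff_exists_step {i j : Fin d → ℕ} : i ⋖ j ↔ ∃ ℓ, j = step i ℓ := by
  classical
  simp [Pi.covBy_iff_exists_right_eq, step]

theorem le_step (i : Fin d → ℕ) (ℓ : Fin d) : i ≤ step i ℓ :=
  (covBy_iff_exists_step.2 ⟨ℓ, rfl⟩).le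

theorem sum_step (i : Fin d → ℕ) (ℓ : Fin d) : ∑ k, step i ℓ k = ∑ k, i k + 1 := by
  classical
  simp only [step, Finset.sum_update_of_mem (Finset.mem_univ ℓ), Finset.sdiff_singleton_eq_erase]
  rw [add_comm (i ℓ), add_assoc, Finset.add_sum_erase _ _ (Finset.mem_univ ℓ), add_comm]

theorem antitone_of_step_le {β : Type*} [Preorder β] {f : (Fin d → ℕ) → β}
    (hf : ∀ i ℓ, f (step i ℓ) ≤ f i) : Antitone f :=
  (antitone_iff_forall_covBy f).2 fun i _ h => by
    obtain ⟨ℓ, rfl⟩ := covBy_iff_exists_step.1 h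
    exact hf i ℓ

def maxStep (π : (Fin d → ℕ) → ℕ) (i : Fin d → ℕ) : ℕ := Finset.univ.sup fun ℓ => π (step i ℓ)

def cornerCount (π : (Fin d → ℕ) → ℕ) (i : Fin d → ℕ) : ℕ := π i - maxStep π i

theorem le_maxStep (π : (Fin d → ℕ) → ℕ) (i : Fin d → ℕ) (ℓ : Fin d) :
    π (step i ℓ) ≤ maxStep π i :=
  Finset.le_sup (f := fun ℓ => π (step i ℓ)) (Finset.mem_univ ℓ)

theorem cornerCount_add_maxStep {π : (Fin d → ℕ) → ℕ} (hπ : Antitone π) (i : Fin d → ℕ) :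
    cornerCount π i + maxStep π i = π i :=
  Nat.sub_add_cancel (Finset.sup_le fun ℓ _ => hπ (le_step i ℓ))

theorem mem_Cor_iff {π : (Fin d → ℕ) → ℕ} {i : Fin d → ℕ} {k : ℕ} :
    (i, k) ∈ Cor π ↔ maxStep π i < k ∧ k ≤ π i := by
  constructor
  · rintro ⟨hk, hkπ, hstep⟩
    exact ⟨(Finset.sup_lt_iff hk).2 fun ℓ _ => hstep ℓ, hkπ⟩
  · rintro ⟨hmax, hkπ⟩
    exact ⟨by omega, hkπ, fun ℓ => (le_maxStep π i ℓ).trans_lt hmax⟩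

theorem cor_eq_sum_cornerCount {π : (Fin d → ℕ) → ℕ} {s : Finset (Fin d → ℕ)}
    (hs : Function.support π ⊆ s) : cor π = ∑ i ∈ s, cornerCount π i := by
  classical
  have hCor : Cor π = ↑(s.biUnion fun i => {i} ×ˢ Finset.Ioc (maxStep π i) (π i)) := by
    ext ⟨i, k⟩
    simp only [mem_Cor_iff, Finset.coe_biUnion, Set.mem_iUnion, Finset.mem_coe,
      Finset.mem_product, Finset.mem_singleton, Finset.mem_Ioc, exists_prop]
    constructor
    · rintro hk
      exact ⟨i, hs (by simp only [Function.mem_support]; omega), rfl, hk⟩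
    · rintro ⟨_, _, rfl, hk⟩
      exact hk
  rw [cor, hCor, Nat.card_coe_set_eq, Set.ncard_coe_finset, Finset.card_biUnion]
  · simp [cornerCount]
  · intro i _ j _ hij
    exact Finset.disjoint_product.2 (Or.inl (Finset.disjoint_singleton.2 hij))

section Inverse

variable {ρ : Set (Fin d → ℕ)}

open scoped Classical in
def ofCornerCount (hfin : ρ.Finite) (A : ρ → ℕ) (i : Fin d → ℕ) : ℕ :=
  if h : i ∈ ρ then A ⟨i, h⟩ + Finset.univ.sup fun ℓ => ofCornerCount hfin A (step i ℓ) else 0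
termination_by (hfin.toFinset.sup fun j => ∑ k, j k) + 1 - ∑ k, i k
decreasing_by
  have := Finset.le_sup (f := fun j => ∑ k, j k) (hfin.mem_toFinset.2 h)
  simp only [sum_step] at *
  omega

variable (hfin : ρ.Finite) (A : ρ → ℕ)

theorem ofCornerCount_of_mem {i : Fin d → ℕ} (h : i ∈ ρ) :
    ofCornerCount hfin A i = A ⟨i, h⟩ + maxStep (ofCornerCount hfin A) i := by
  rw [ofCornerCount, dif_pos h]
  rfl

theorem ofCornerCount_of_notMem {i : Fin d → ℕ} (h : i ∉ ρ) : ofCornerCount hfin A i = 0 := by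
  rw [ofCornerCount, dif_neg h]

theorem support_ofCornerCount_subset : Function.support (ofCornerCount hfin A) ⊆ ρ :=
  fun _ hi => by_contra fun h => hi (ofCornerCount_of_notMem hfin A h)

theorem antitone_ofCornerCount (hdown : DownClosed ρ) : Antitone (ofCornerCount hfin A) := by
  refine antitone_of_step_le fun i ℓ => ?_
  by_cases h : i ∈ ρ
  · rw [ofCornerCount_of_mem hfin A h]
    exact (le_maxStep _ i ℓ).trans (Nat.le_add_left _ _)
  · have hstep : step i ℓ ∉ ρ := fun hs => h (hdown i _ (le_step i ℓ) hs)
    rw [ofCornerCount_of_notMem hfin A h, ofCornerCount_of_notMem hfin A hstep]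

theorem cornerCount_ofCornerCount (i : ρ) : cornerCount (ofCornerCount hfin A) i = A i := by
  rw [cornerCount, ofCornerCount_of_mem hfin A i.2, Nat.add_sub_cancel]

theorem cor_ofCornerCount [Fintype ρ] : cor (ofCornerCount hfin A) = ∑ i, A i := by
  rw [cor_eq_sum_cornerCount (s := ρ.toFinset) (by simpa using support_ofCornerCount_subset hfin A),
    ← Finset.sum_set_coe]
  exact Finset.sum_congr rfl fun i _ => cornerCount_ofCornerCount hfin A i

theorem ofCornerCount_cornerCount {π : (Fin d → ℕ) → ℕ} (hπ : Antitone π)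
    (hsupp : Function.support π ⊆ ρ) : ofCornerCount hfin (fun i => cornerCount π i) = π := by
  funext i
  induction i using ofCornerCount.induct hfin with
  | case1 i h ih =>
    have hmax : maxStep (ofCornerCount hfin fun i => cornerCount π i) i = maxStep π i :=
      Finset.sup_congr rfl fun ℓ _ => ih ℓ
    rw [ofCornerCount_of_mem hfin _ h, hmax]
    exact cornerCount_add_maxStep hπ i
  | case2 i h =>
    rw [ofCornerCount_of_notMem hfin _ h]
    exact (Function.notMem_support.1 fun hi => h (hsupp hi)).symm

def cornerCountEquiv (hdown : DownClosed ρ) :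
    {π : (Fin d → ℕ) → ℕ // IsPartition π ∧ Function.support π ⊆ ρ} ≃ (ρ → ℕ) where
  toFun π i := cornerCount π.1 i
  invFun A := ⟨ofCornerCount hfin A,
    ⟨hfin.subset (support_ofCornerCount_subset hfin A), antitone_ofCornerCount hfin A hdown⟩,
    support_ofCornerCount_subset hfin A⟩
  left_inv π := Subtype.ext (ofCornerCount_cornerCount hfin π.2.1.2 π.2.2)
  right_inv A := funext (cornerCount_ofCornerCount hfin A)

end Inverse

end HDP

/-- `Σ_{sh(π) ⊆ ρ} t^{cor π} = (1 - t)^{-|ρ|}`. -/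
theorem corner_generating_function_q_one {d : ℕ} (ρ : Set (Fin d → ℕ))
    (hfin : ρ.Finite) (hdown : DownClosed ρ) :
    ∑' π : {π : (Fin d → ℕ) → ℕ // IsPartition π ∧ Function.support π ⊆ ρ},
        (PowerSeries.X : PowerSeries ℚ) ^ cor π.1
      = ((1 - (PowerSeries.X : PowerSeries ℚ))⁻¹) ^ (Nat.card ρ) := by
  have : Fintype ρ := hfin.fintype
  have : T2Space (PowerSeries ℚ) := PowerSeries.WithPiTopology.instT2Space ℚ
  have hsum : HasSum (fun A : ρ → ℕ => (PowerSeries.X : PowerSeries ℚ) ^ ∑ i, A i)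
      (PowerSeries.mk 1 ^ Fintype.card ρ) :=
    PowerSeries.WithPiTopology.hasSum_X_pow_sum ρ
  rw [← (cornerCountEquiv hfin hdown).symm.tsum_eq, Nat.card_eq_fintype_card,
    PowerSeries.inv_one_sub_X_eq_mk_one, ← hsum.tsum_eq]
  simp only [cornerCountEquiv, Equiv.coe_fn_symm_mk, cor_ofCornerCount]
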